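/- arXiv:2507.01144 — 3 statements merged into one kernel-verified Lean document; each statement's English description precedes it below -/
import Mathlib

section
/- Assume conditions (A2)–(A4). Then lim_{n→∞} sup_{t∈[n,n+1)} | I_t(g)/√(t ln ln t) − I_n(g)/√(n ln ln n) | = 0, ℙ_μ-almost surely (n ranging over the positive integers). -/
open MeasureTheory Filter Set
open scoped ENNReal Topology NNReal

noncomputable section

variable {X : Type*} [MetricSpace X] [CompleteSpace X] [SecondCountableTopology X]
  [MeasurableSpace X] [BorelSpace X]

/-- Action of a transition kernel family on measures: `ν ↦ ν P_t`. -/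
def measAct (P : ℝ → X → Measure X) (t : ℝ) (ν : Measure X) : Measure X :=
  ν.bind (P t)

/-- Dual action of the semigroup on functions: `f ↦ P_t f`. -/
def funAct (P : ℝ → X → Measure X) (t : ℝ) (f : X → ℝ) (x : X) : ℝ :=
  ∫ y, f y ∂(P t x)

/-- A Borel (probability) measure has a finite first moment. -/
def FiniteFirstMoment (ν : Measure X) : Prop :=
  ∀ x₀ : X, Integrable (fun x => dist x₀ x) ν

/-- The Wasserstein (Kantorovich–Rubinstein) distance `d_W`. -/
def wassDist (μ ν : Measure X) : ℝ :=
  sSup {r | ∃ f : X → ℝ, LipschitzWith 1 f ∧ r = |(∫ x, f x ∂μ) - ∫ x, f x ∂ν|}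

/-- A Markov semigroup `{P_t}_{t ≥ 0}` of probability kernels on `X`. -/
structure IsMarkovSemigroup (P : ℝ → X → Measure X) : Prop where
  prob : ∀ t, 0 ≤ t → ∀ x, IsProbabilityMeasure (P t x)
  jointMeas : ∀ A : Set X, MeasurableSet A → Measurable fun p : ℝ × X => P p.1 p.2 A
  init : ∀ x, P 0 x = Measure.dirac x
  chapman : ∀ s t, 0 ≤ s → 0 ≤ t → ∀ x, P (s + t) x = (P s x).bind (P t)

/-- Condition (A1): stochastic continuity of the semigroup. -/
def CondA1 (P : ℝ → X → Measure X) : Prop :=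
  ∀ f : X → ℝ, Continuous f → (∃ C, ∀ x, |f x| ≤ C) →
    ∀ x : X, Tendsto (fun t => funAct P t f x) (𝓝[>] (0 : ℝ)) (𝓝 (f x))

/-- Condition (A2): the Feller property. -/
def CondA2 (P : ℝ → X → Measure X) : Prop :=
  ∀ f : X → ℝ, Continuous f → (∃ C, ∀ x, |f x| ≤ C) → ∀ t, 0 ≤ t →
    Continuous (funAct P t f) ∧ ∃ C, ∀ x, |funAct P t f x| ≤ C

/-- Condition (A3): preservation of finite first moments and exponential
contractivity in the Wasserstein distance, with rate `γ`. -/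
def CondA3 (P : ℝ → X → Measure X) (γ : ℝ) : Prop :=
  (∀ ν : Measure X, IsProbabilityMeasure ν → FiniteFirstMoment ν →
    ∀ t, 0 < t → FiniteFirstMoment (measAct P t ν)) ∧
  0 < γ ∧
  ∀ t, 0 ≤ t → ∀ x y : X,
    wassDist (P t x) (P t y) ≤ Real.exp (-γ * t) * dist x y

/-- Condition (A4): a uniform-in-time moment bound of order `ζ > 2` for the initial
distribution `μ`, along the semigroup. -/
def CondA4 (P : ℝ → X → Measure X) (μ : Measure X) (x₀ : X) (ζ : ℝ) : Prop :=
  2 < ζ ∧ ∃ M : ℝ, ∀ t, 0 ≤ t →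
    (∫⁻ x, ENNReal.ofReal (dist x₀ x ^ ζ) ∂(measAct P t μ)) ≤ ENNReal.ofReal M

variable {Ω : Type*} [MeasurableSpace Ω]

/-- The natural filtration of the process `Φ`. -/
def natFiltration (Φ : ℝ → Ω → X) (s : ℝ) : MeasurableSpace Ω :=
  ⨆ u ∈ Set.Icc (0 : ℝ) s, MeasurableSpace.comap (Φ u) inferInstance

/-- A (progressively measurable) time-homogeneous Markov process with state space `X`,
transition semigroup `P` and initial distribution `μ`, realized on `(Ω, ℙ)`. -/
structure IsMarkovProcess (P : ℝ → X → Measure X) (Φ : ℝ → Ω → X)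
    (ℙ : Measure Ω) (μ : Measure X) : Prop where
  jointMeas : Measurable fun p : ℝ × Ω => Φ p.1 p.2
  init : ℙ.map (Φ 0) = μ
  law : ∀ t, 0 ≤ t → ℙ.map (Φ t) = measAct P t μ
  markov : ∀ f : X → ℝ, Measurable f → (∃ C, ∀ x, |f x| ≤ C) →
    ∀ s t : ℝ, 0 ≤ s → 0 ≤ t →
      (fun ω => funAct P t f (Φ s ω)) =ᵐ[ℙ]
        ℙ[(fun ω => f (Φ (s + t) ω)) | natFiltration Φ s]

/-- A Markov process together with a measurable family of laws `{ℙ_x}_{x ∈ X}`,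
with `ℙ_x(Φ_0 = x) = 1`. -/
structure IsMarkovFamily (P : ℝ → X → Measure X) (Φ : ℝ → Ω → X)
    (ℙ : X → Measure Ω) : Prop where
  prob : ∀ x, IsProbabilityMeasure (ℙ x)
  jointMeas : Measurable fun p : ℝ × Ω => Φ p.1 p.2
  measFam : ∀ s : Set Ω, MeasurableSet s → Measurable fun x => ℙ x s
  start : ∀ x, (ℙ x) {ω | Φ 0 ω = x} = 1
  law : ∀ x, ∀ t, 0 ≤ t → (ℙ x).map (Φ t) = P t x
  markov : ∀ x : X, ∀ f : X → ℝ, Measurable f → (∃ C, ∀ z, |f z| ≤ C) →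
    ∀ s t : ℝ, 0 ≤ s → 0 ≤ t →
      (fun ω => funAct P t f (Φ s ω)) =ᵐ[ℙ x]
        (ℙ x)[(fun ω => f (Φ (s + t) ω)) | natFiltration Φ s]

/-- The corrector function `χ_g(x) = ∫_0^∞ (P_t g)(x) dt`. -/
def corrector (P : ℝ → X → Measure X) (g : X → ℝ) (x : X) : ℝ :=
  ∫ t in Set.Ioi (0 : ℝ), funAct P t g x

/-- The additive functional `I_t(g) = ∫_0^t g(Φ_s) ds`. -/
def addFun (g : X → ℝ) (Φ : ℝ → Ω → X) (t : ℝ) (ω : Ω) : ℝ :=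
  ∫ s in (0 : ℝ)..t, g (Φ s ω)

/-- The martingale part `M_t(g) = χ_g(Φ_t) - χ_g(Φ_0) + I_t(g)`. -/
def mart (P : ℝ → X → Measure X) (g : X → ℝ) (Φ : ℝ → Ω → X) (t : ℝ) (ω : Ω) : ℝ :=
  corrector P g (Φ t ω) - corrector P g (Φ 0 ω) + addFun g Φ t ω

/-- The martingale increments `Z_n(g) = M_n(g) - M_{n-1}(g)`. -/
def incr (P : ℝ → X → Measure X) (g : X → ℝ) (Φ : ℝ → Ω → X) (n : ℕ) (ω : Ω) : ℝ :=
  mart P g Φ (n : ℝ) ω - mart P g Φ ((n : ℝ) - 1) ω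

/-- Truncation `a ∧ p` for `p ∈ ℕ ∪ {∞}`, with the convention `a ∧ ∞ = a`. -/
def truncMin (a : ℝ) (p : ℕ∞) : ℝ :=
  if p = ⊤ then a else min a (p.toNat : ℝ)

/-!
The statement holds for every path, not only almost surely. Since `g` is bounded by `C`, the
path `t ↦ I_t(g)` is `C`-Lipschitz with `I_0(g) = 0`, so `|I_n(g)| ≤ C n`. On `[n, n + 1]` the
numerator thus moves by at most `C`, while the normalisation `h(t) = √(t log log t)` grows by at
most `h(n) / n` (because `h(n + 1)² - h(n)² ≤ 2 log log n = 2 h(n)² / n`). Together this bounds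
the oscillation over `[n, n + 1)` by `2 C / h(n) → 0`.
-/

open Real

lemma lipschitzWith_intervalIntegral {E : Type*} [NormedAddCommGroup E] [NormedSpace ℝ E]
    {f : ℝ → E} {C : ℝ} (hf : AEStronglyMeasurable f volume) (hC : ∀ x, ‖f x‖ ≤ C) (a : ℝ) :
    LipschitzWith (Real.toNNReal C) fun t => ∫ s in a..t, f s := by
  have hint : ∀ u v, IntervalIntegrable f volume u v := fun u v =>
    (intervalIntegrable_const (c := C)).mono_fun hf.restrict
      (ae_of_all _ fun x => (hC x).trans (le_abs_self C))
  refine LipschitzWith.of_dist_le' fun t u => ?_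
  rw [dist_eq_norm, intervalIntegral.integral_interval_sub_left (hint a t) (hint a u),
    Real.dist_eq]
  exact intervalIntegral.norm_integral_le_of_norm_le_const fun x _ => hC x

lemma log_sub_log_le_div {x y : ℝ} (hx : 0 < x) (hy : 0 < y) : log y - log x ≤ (y - x) / x := by
  have h := log_le_sub_one_of_pos (div_pos hy hx)
  rwa [log_div hy.ne' hx.ne', ← div_self hx.ne', div_sub_div_same] at h

/-- The normalisation `√(t log log t)` in the law of the iterated logarithm. -/
def lilScale (t : ℝ) : ℝ := √(t * log (log t))

lemma tendsto_lilScale_atTop : Tendsto lilScale atTop atTop :=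
  tendsto_sqrt_atTop.comp
    (tendsto_id.atTop_mul_atTop₀ (tendsto_log_atTop.comp tendsto_log_atTop))

section LargeArgument

variable {x y : ℝ}

lemma exp_one_le_log_of_exp_exp_le (hx : exp (exp 1) ≤ x) : exp 1 ≤ log x :=
  (le_log_iff_exp_le ((exp_pos _).trans_le hx)).2 hx

lemma one_le_log_log_of_exp_exp_le (hx : exp (exp 1) ≤ x) : 1 ≤ log (log x) :=
  (le_log_iff_exp_le ((exp_pos 1).trans_le (exp_one_le_log_of_exp_exp_le hx))).2
    (exp_one_le_log_of_exp_exp_le hx)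

lemma sq_lilScale (hx : exp (exp 1) ≤ x) : lilScale x ^ 2 = x * log (log x) :=
  sq_sqrt (mul_nonneg ((exp_pos _).trans_le hx).le
    (zero_le_one.trans (one_le_log_log_of_exp_exp_le hx)))

lemma lilScale_pos (hx : exp (exp 1) ≤ x) : 0 < lilScale x :=
  sqrt_pos.2 (mul_pos ((exp_pos _).trans_le hx)
    (zero_lt_one.trans_le (one_le_log_log_of_exp_exp_le hx)))

lemma lilScale_le_lilScale (hx : exp (exp 1) ≤ x) (hxy : x ≤ y) : lilScale x ≤ lilScale y := by
  have hx0 : 0 < x := (exp_pos _).trans_le hx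
  have hlog : 0 < log x := (exp_pos 1).trans_le (exp_one_le_log_of_exp_exp_le hx)
  refine sqrt_le_sqrt (mul_le_mul hxy ?_ (zero_le_one.trans (one_le_log_log_of_exp_exp_le hx))
    (hx0.le.trans hxy))
  exact log_le_log hlog (log_le_log hx0 hxy)

lemma log_log_add_one_sub_le (hx : exp (exp 1) ≤ x) :
    log (log (x + 1)) - log (log x) ≤ 1 / (x * log x) := by
  have hx0 : 0 < x := (exp_pos _).trans_le hx
  have hlog : 0 < log x := (exp_pos 1).trans_le (exp_one_le_log_of_exp_exp_le hx)
  have hlog' : log x ≤ log (x + 1) := log_le_log hx0 (by linarith)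
  calc log (log (x + 1)) - log (log x) ≤ (log (x + 1) - log x) / log x :=
        log_sub_log_le_div hlog (hlog.trans_le hlog')
    _ ≤ ((x + 1 - x) / x) / log x := by
        gcongr; exact log_sub_log_le_div hx0 (by linarith)
    _ = 1 / (x * log x) := by rw [add_sub_cancel_left, div_div]

lemma sq_lilScale_add_one_sub_le (hx : exp (exp 1) ≤ x) :
    lilScale (x + 1) ^ 2 - lilScale x ^ 2 ≤ 2 * log (log x) := by
  have hx1 : exp (exp 1) ≤ x + 1 := by linarith
  have hx0 : 0 < x := (exp_pos _).trans_le hx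
  have hlog : 2 ≤ log x := by
    have := add_one_le_exp 1
    linarith [exp_one_le_log_of_exp_exp_le hx]
  have hL := one_le_log_log_of_exp_exp_le hx
  have hinc : (x + 1) * (log (log (x + 1)) - log (log x)) ≤ 1 := by
    calc (x + 1) * (log (log (x + 1)) - log (log x)) ≤ (x + 1) * (1 / (x * log x)) := by
          gcongr; exact log_log_add_one_sub_le hx
      _ ≤ 1 := by
          have : 1 ≤ x := (one_le_exp (exp_pos 1).le).trans hx
          rw [mul_one_div, div_le_one (by positivity)]
          nlinarith
  rw [sq_lilScale hx1, sq_lilScale hx]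
  linarith

lemma mul_lilScale_add_one_sub_le (hx : exp (exp 1) ≤ x) :
    x * (lilScale (x + 1) - lilScale x) ≤ lilScale x := by
  have hx0 : 0 < x := (exp_pos _).trans_le hx
  have ha := lilScale_pos hx
  have hab := lilScale_le_lilScale hx (le_add_of_nonneg_right zero_le_one)
  have hsq := sq_lilScale_add_one_sub_le hx
  set a := lilScale x
  set b := lilScale (x + 1)
  refine le_of_mul_le_mul_right ?_ (mul_pos two_pos ha)
  calc x * (b - a) * (2 * a) ≤ x * (b - a) * (a + b) := by gcongr; linarith
    _ = x * (b ^ 2 - a ^ 2) := by ring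
    _ ≤ x * (2 * log (log x)) := by gcongr
    _ = a * (2 * a) := by rw [← mul_assoc, mul_comm x 2, mul_assoc, ← sq_lilScale hx]; ring

end LargeArgument

lemma abs_div_lilScale_sub_le {F : ℝ → ℝ} {C : ℝ≥0} (hF : LipschitzWith C F) (hF0 : F 0 = 0)
    {x t : ℝ} (hx : exp (exp 1) ≤ x) (ht : t ∈ Icc x (x + 1)) :
    |F t / lilScale t - F x / lilScale x| ≤ 2 * C / lilScale x := by
  obtain ⟨hxt, htx⟩ := ht
  have hx0 : 0 < x := (exp_pos _).trans_le hx
  set a := lilScale x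
  set s := lilScale t
  set b := lilScale (x + 1)
  have ha : 0 < a := lilScale_pos hx
  have has : a ≤ s := lilScale_le_lilScale hx hxt
  have hsb : s ≤ b := lilScale_le_lilScale (hx.trans hxt) htx
  have hs : 0 < s := ha.trans_le has
  have hb : 0 < b := hs.trans_le hsb
  have hsa : 0 ≤ 1 / a - 1 / s := sub_nonneg.2 (one_div_le_one_div_of_le ha has)
  have hFt : |F t - F x| ≤ C := by
    have htx1 : dist t x ≤ 1 := by rw [Real.dist_eq, abs_of_nonneg (sub_nonneg.2 hxt)]; linarith
    simpa only [Real.dist_eq, mul_one] using hF.dist_le_mul_of_le htx1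
  have hFx : |F x| ≤ C * x := by
    have := hF.dist_le_mul x 0
    rwa [Real.dist_eq, Real.dist_eq, hF0, sub_zero, sub_zero, abs_of_pos hx0] at this
  have hgrowth : x * (1 / a - 1 / b) ≤ 1 / b := by
    rw [div_sub_div _ _ ha.ne' hb.ne', ← mul_div_assoc, div_le_div_iff₀ (by positivity) hb]
    nlinarith [mul_lilScale_add_one_sub_le hx]
  calc |F t / s - F x / a| = |(F t - F x) / s + F x * (1 / s - 1 / a)| := by
        congr 1; ring
    _ ≤ C / s + C * x * (1 / a - 1 / s) := by
        refine (abs_add_le _ _).trans (add_le_add ?_ ?_)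
        · rw [abs_div, abs_of_pos hs]
          exact div_le_div_of_nonneg_right hFt hs.le
        · rw [abs_mul, abs_sub_comm, abs_of_nonneg hsa]
          exact mul_le_mul_of_nonneg_right hFx hsa
    _ ≤ C / a + C * (x * (1 / a - 1 / b)) := by
        rw [← mul_assoc]
        gcongr
    _ ≤ C / a + C * (1 / b) := by gcongr
    _ ≤ C / a + C / a := by
        rw [mul_one_div]
        gcongr
        exact has.trans hsb
    _ = 2 * C / a := by ring

lemma tendsto_iSup_Ico_abs_div_lilScale_sub {F : ℝ → ℝ} {C : ℝ≥0} (hF : LipschitzWith C F)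
    (hF0 : F 0 = 0) :
    Tendsto (fun n : ℕ => ⨆ t ∈ Ico (n : ℝ) (n + 1), |F t / lilScale t - F n / lilScale n|)
      atTop (𝓝 0) := by
  have hbound : Tendsto (fun n : ℕ => 2 * C / lilScale n) atTop (𝓝 0) :=
    tendsto_const_nhds.div_atTop (tendsto_lilScale_atTop.comp tendsto_natCast_atTop_atTop)
  refine squeeze_zero' (Eventually.of_forall fun n =>
    Real.iSup_nonneg fun t => Real.iSup_nonneg fun _ => abs_nonneg _) ?_ hbound
  filter_upwards [tendsto_natCast_atTop_atTop.eventually_ge_atTop (exp (exp 1))] with n hn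
  have hnonneg : 0 ≤ 2 * C / lilScale n := div_nonneg (by positivity) (lilScale_pos hn).le
  exact Real.iSup_le (fun t => Real.iSup_le (fun ht =>
    abs_div_lilScale_sub_le hF hF0 hn (Ico_subset_Icc_self ht)) hnonneg) hnonneg

theorem discretization_lemma_general
    (P : ℝ → X → Measure X)
    (μ : Measure X)
    (g : X → ℝ) (K : ℝ≥0) (hLip : LipschitzWith K g) (hBd : ∃ C, ∀ x, |g x| ≤ C)
    (ℙμ : Measure Ω)
    (Φ : ℝ → Ω → X) (hΦ : IsMarkovProcess P Φ ℙμ μ) :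
    ∀ᵐ ω ∂ℙμ,
      Tendsto (fun n : ℕ =>
          ⨆ t ∈ Set.Ico (n : ℝ) ((n : ℝ) + 1),
            |addFun g Φ t ω / Real.sqrt (t * Real.log (Real.log t)) -
              addFun g Φ (n : ℝ) ω / Real.sqrt ((n : ℝ) * Real.log (Real.log (n : ℝ)))|)
        atTop (𝓝 0) := by
  obtain ⟨C, hC⟩ := hBd
  refine ae_of_all _ fun ω => ?_
  have hpath : Measurable fun s => g (Φ s ω) :=
    hLip.continuous.measurable.comp (hΦ.jointMeas.comp measurable_prodMk_right)
  exact tendsto_iSup_Ico_abs_div_lilScale_sub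
    (lipschitzWith_intervalIntegral hpath.aestronglyMeasurable (fun s => hC (Φ s ω)) 0)
    intervalIntegral.integral_same

/-- Lemma 1. Under (A2)–(A4),
`sup_{t ∈ [n,n+1)} |I_t(g)/√(t ln ln t) - I_n(g)/√(n ln ln n)| → 0`, `ℙ_μ`-a.s. -/
theorem discretization_lemma
    (P : ℝ → X → Measure X) (hP : IsMarkovSemigroup P)
    (γ ζ : ℝ) (x₀ : X) (μ μstar : Measure X)
    [IsProbabilityMeasure μ] [IsProbabilityMeasure μstar]
    (hA2 : CondA2 P) (hA3 : CondA3 P γ) (hA4 : CondA4 P μ x₀ ζ)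
    (hinv : ∀ t, 0 ≤ t → measAct P t μstar = μstar)
    (g : X → ℝ) (K : ℝ≥0) (hLip : LipschitzWith K g) (hBd : ∃ C, ∀ x, |g x| ≤ C)
    (hmean : ∫ x, g x ∂μstar = 0)
    (ℙμ : Measure Ω) [IsProbabilityMeasure ℙμ]
    (Φ : ℝ → Ω → X) (hΦ : IsMarkovProcess P Φ ℙμ μ) :
    ∀ᵐ ω ∂ℙμ,
      Tendsto (fun n : ℕ =>
          ⨆ t ∈ Set.Ico (n : ℝ) ((n : ℝ) + 1),
            |addFun g Φ t ω / Real.sqrt (t * Real.log (Real.log t)) -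
              addFun g Φ (n : ℝ) ω / Real.sqrt ((n : ℝ) * Real.log (Real.log (n : ℝ)))|)
        atTop (𝓝 0) :=
  discretization_lemma_general P μ g K hLip hBd ℙμ Φ hΦ

end
end

section
/- Assume conditions (A2)–(A4). Then there exists a finite constant D (one may take D = (2C‖g‖²_{BL}/γ)(c₁(μ)+1), where C is the constant from the exponential ergodicity estimate d_W(νP_t,μ_*) ≤ Ce^{−γt}(∫V dν + 1), ‖g‖_{BL} = sup|g| + Lip(g), and c₁(μ) := sup_{t≥0} ∫ V d(μP_t)) such that E_μ[I_n(g)²] ≤ D·n for every positive integer n. -/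
open MeasureTheory Filter Set
open scoped ENNReal Topology NNReal

noncomputable section

variable {X : Type*} [MetricSpace X] [CompleteSpace X] [SecondCountableTopology X]
  [MeasurableSpace X] [BorelSpace X]

variable {Ω : Type*} [MeasurableSpace Ω]

/-!
For `s ≤ t` the Markov property gives `E[g(Φ_s) g(Φ_t)] = E[g(Φ_s) (P_{t-s} g)(Φ_s)]`. Since
`∫ g dμstar = 0` and `μstar` is invariant, the Wasserstein contraction (A3) yields
`|P_u g x| ≤ K e^{-γu} (d(x₀, x) + ∫ d(x₀, ·) dμstar)`. The first moment of `μstar` is finite: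
`μ P_k → μstar` weakly by the same contraction, and the first moments of `μ P_k` are uniformly
bounded by (A4). As the first moments of the laws of `Φ_s` are bounded as well, the correlations
decay like `e^{-γ|t-s|}`, and `E[I_n²] = ∫∫_{[0,n]²} E[g(Φ_s) g(Φ_t)] ds dt ≤ A ∫∫ e^{-γ|s-t|}
ds dt ≤ (2A/γ) n`.
-/
open ProbabilityTheory

lemma MeasureTheory.Integrable.of_abs_le {α : Type*} [MeasurableSpace α] {ν : Measure α}
    [IsFiniteMeasure ν] {f : α → ℝ} (hf : AEStronglyMeasurable f ν) {C : ℝ} (hC : ∀ x, |f x| ≤ C) :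
    Integrable f ν :=
  .of_bound hf C (.of_forall fun x => (Real.norm_eq_abs _).trans_le (hC x))

lemma abs_integral_le_of_abs_le {α : Type*} [MeasurableSpace α] {ν : Measure α}
    [IsProbabilityMeasure ν] {f : α → ℝ} {C : ℝ} (hC : ∀ x, |f x| ≤ C) :
    |∫ x, f x ∂ν| ≤ C := by
  simpa using norm_integral_le_of_norm_le_const (μ := ν)
    (.of_forall fun x => (Real.norm_eq_abs _).trans_le (hC x))

lemma abs_mul_le_of_abs_le {a b C C' : ℝ} (ha : |a| ≤ C) (hb : |b| ≤ C') : |a * b| ≤ C * C' := by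
  rw [abs_mul]
  exact mul_le_mul ha hb (abs_nonneg _) ((abs_nonneg _).trans ha)

namespace IsMarkovSemigroup

variable {S : Type*} [MeasurableSpace S] {P : ℝ → S → Measure S} {t : ℝ}

lemma measurable (hP : IsMarkovSemigroup P) (t : ℝ) : Measurable (P t) :=
  Measure.measurable_of_measurable_coe _ fun A hA =>
    (hP.jointMeas A hA).comp (measurable_const.prodMk measurable_id)

def kernel (hP : IsMarkovSemigroup P) (t : ℝ) : Kernel S S :=
  ⟨P t, hP.measurable t⟩

lemma isMarkovKernel_kernel (hP : IsMarkovSemigroup P) (ht : 0 ≤ t) :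
    IsMarkovKernel (hP.kernel t) :=
  ⟨hP.prob t ht⟩

lemma isProbabilityMeasure_measAct (hP : IsMarkovSemigroup P) (ht : 0 ≤ t) (ν : Measure S)
    [IsProbabilityMeasure ν] : IsProbabilityMeasure (measAct P t ν) :=
  have := hP.isMarkovKernel_kernel ht
  inferInstanceAs (IsProbabilityMeasure (hP.kernel t ∘ₘ ν))

lemma stronglyMeasurable_funAct (hP : IsMarkovSemigroup P) {f : S → ℝ}
    (hf : StronglyMeasurable f) (t : ℝ) : StronglyMeasurable (funAct P t f) :=
  hf.integral_kernel (κ := hP.kernel t)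

lemma abs_funAct_le (hP : IsMarkovSemigroup P) {f : S → ℝ} {C : ℝ} (hf : ∀ x, |f x| ≤ C)
    (ht : 0 ≤ t) (x : S) : |funAct P t f x| ≤ C :=
  have := hP.prob t ht x
  abs_integral_le_of_abs_le hf

lemma integral_measAct (hP : IsMarkovSemigroup P) {ν : Measure S} {f : S → ℝ}
    (hf : Integrable f (measAct P t ν)) :
    ∫ y, f y ∂(measAct P t ν) = ∫ x, funAct P t f x ∂ν := by
  change Integrable f (hP.kernel t ∘ₘ ν) at hf
  change ∫ y, f y ∂(hP.kernel t ∘ₘ ν) = _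
  rw [Measure.comp_eq_comp_const_apply] at hf ⊢
  rw [Kernel.integral_comp hf]
  rfl

lemma integral_funAct_of_invariant (hP : IsMarkovSemigroup P) {μstar : Measure S}
    [IsProbabilityMeasure μstar] (hinv : ∀ t, 0 ≤ t → measAct P t μstar = μstar)
    {f : S → ℝ} (hf : Measurable f) {C : ℝ} (hfC : ∀ x, |f x| ≤ C) (ht : 0 ≤ t) :
    ∫ x, funAct P t f x ∂μstar = ∫ x, f x ∂μstar := by
  have hint : Integrable f (measAct P t μstar) := by
    rw [hinv t ht]; exact .of_abs_le hf.aestronglyMeasurable hfC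
  rw [← hP.integral_measAct hint, hinv t ht]

end IsMarkovSemigroup

section Wasserstein

variable {S : Type*} [MetricSpace S] [MeasurableSpace S] [OpensMeasurableSpace S]
  {ν ν₁ ν₂ : Measure S} {f : S → ℝ} {K : ℝ≥0}

lemma finiteFirstMoment_dirac (x : S) : FiniteFirstMoment (Measure.dirac x) := fun _ =>
  integrable_dirac' (continuous_const.dist continuous_id).stronglyMeasurable enorm_lt_top

lemma LipschitzWith.integrable_of_integrable_dist [IsFiniteMeasure ν] (hf : LipschitzWith K f)
    {x₀ : S} (hν : Integrable (fun x => dist x₀ x) ν) : Integrable f ν := by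
  refine ((integrable_const |f x₀|).add (hν.const_mul K)).mono' hf.continuous.aestronglyMeasurable
    (.of_forall fun x => ?_)
  have hdist : |f x₀ - f x| ≤ K * dist x₀ x := by simpa [Real.dist_eq] using hf.dist_le_mul x₀ x
  have := abs_sub_abs_le_abs_sub (f x) (f x₀)
  rw [abs_sub_comm] at this
  simp only [Real.norm_eq_abs, Pi.add_apply]
  linarith

lemma abs_integral_sub_le_integral_dist [IsProbabilityMeasure ν] (hf : LipschitzWith 1 f)
    {x₀ : S} (hν : Integrable (fun x => dist x₀ x) ν) :
    |∫ x, f x ∂ν - f x₀| ≤ ∫ x, dist x₀ x ∂ν := by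
  have hfi := hf.integrable_of_integrable_dist hν
  have : ∫ x, f x ∂ν - f x₀ = ∫ x, (f x - f x₀) ∂ν := by
    rw [integral_sub hfi (integrable_const _), integral_const, probReal_univ, one_smul]
  rw [this, ← Real.norm_eq_abs]
  refine norm_integral_le_of_norm_le hν (.of_forall fun x => ?_)
  simpa [Real.dist_eq, dist_comm x₀] using hf.dist_le_mul x x₀

lemma abs_integral_sub_le_wassDist [IsProbabilityMeasure ν₁] [IsProbabilityMeasure ν₂]
    (h₁ : FiniteFirstMoment ν₁) (h₂ : FiniteFirstMoment ν₂) (hf : LipschitzWith 1 f) :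
    |∫ x, f x ∂ν₁ - ∫ x, f x ∂ν₂| ≤ wassDist ν₁ ν₂ := by
  obtain ⟨x₀⟩ := nonempty_of_isProbabilityMeasure ν₁
  refine le_csSup ⟨(∫ x, dist x₀ x ∂ν₁) + ∫ x, dist x₀ x ∂ν₂, ?_⟩ ⟨f, hf, rfl⟩
  rintro _ ⟨h, hh, rfl⟩
  have e₁ := abs_integral_sub_le_integral_dist hh (h₁ x₀)
  have e₂ := abs_integral_sub_le_integral_dist hh (h₂ x₀)
  rw [abs_le] at e₁ e₂ ⊢
  constructor <;> linarith

lemma abs_integral_sub_le_mul_wassDist [IsProbabilityMeasure ν₁] [IsProbabilityMeasure ν₂]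
    (h₁ : FiniteFirstMoment ν₁) (h₂ : FiniteFirstMoment ν₂) (hf : LipschitzWith K f) :
    |∫ x, f x ∂ν₁ - ∫ x, f x ∂ν₂| ≤ K * wassDist ν₁ ν₂ := by
  rcases eq_or_ne K 0 with rfl | hK
  · obtain ⟨x₀⟩ := nonempty_of_isProbabilityMeasure ν₁
    have hconst : ∀ x, f x = f x₀ := fun x => by simpa using hf.dist_le_mul x x₀
    simp [hconst]
  · have hK' : (0 : ℝ) < K := by positivity
    have h1 : LipschitzWith 1 fun x => (K : ℝ)⁻¹ • f x :=
      ((lipschitzWith_smul (K : ℝ)⁻¹).comp hf).weaken (by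
        rw [nnnorm_inv, Real.nnnorm_of_nonneg K.coe_nonneg]
        exact (inv_mul_cancel₀ (by exact_mod_cast hK)).le)
    have := abs_integral_sub_le_wassDist h₁ h₂ h1
    simp only [smul_eq_mul] at this
    rwa [integral_const_mul, integral_const_mul, ← mul_sub, abs_mul,
      abs_of_pos (inv_pos.2 hK'), inv_mul_le_iff₀ hK'] at this

end Wasserstein

namespace IsMarkovSemigroup

variable {S : Type*} [MetricSpace S] [MeasurableSpace S] [OpensMeasurableSpace S]
  {P : ℝ → S → Measure S} {γ t : ℝ} {f : S → ℝ} {K : ℝ≥0}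
  {μ μstar : Measure S} [IsProbabilityMeasure μ] [IsProbabilityMeasure μstar]

lemma finiteFirstMoment (hP : IsMarkovSemigroup P) (hA3 : CondA3 P γ) (ht : 0 ≤ t) (x : S) :
    FiniteFirstMoment (P t x) := by
  rcases ht.lt_or_eq with ht | rfl
  · simpa [measAct, Measure.dirac_bind (hP.measurable t)] using
      hA3.1 _ inferInstance (finiteFirstMoment_dirac x) t ht
  · rw [hP.init]
    exact finiteFirstMoment_dirac x

lemma abs_funAct_sub_le (hP : IsMarkovSemigroup P) (hA3 : CondA3 P γ) (hf : LipschitzWith K f)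
    (ht : 0 ≤ t) (x y : S) :
    |funAct P t f x - funAct P t f y| ≤ K * (Real.exp (-γ * t) * dist x y) := by
  have := hP.prob t ht x
  have := hP.prob t ht y
  refine (abs_integral_sub_le_mul_wassDist (hP.finiteFirstMoment hA3 ht x)
    (hP.finiteFirstMoment hA3 ht y) hf).trans ?_
  gcongr
  exact hA3.2.2 t ht x y

/-- `∫ f dμstar - ∫ f d(μ P_k)` is the integral of `P_k f y - P_k f x` against `μ ⊗ μstar`, which
tends to zero by dominated convergence since `|P_k f y - P_k f x| ≤ K e^{-γk} d(x, y)`. -/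
lemma tendsto_integral_measAct (hP : IsMarkovSemigroup P) (hA3 : CondA3 P γ)
    (hinv : ∀ t, 0 ≤ t → measAct P t μstar = μstar) (hf : LipschitzWith K f) {C : ℝ}
    (hfC : ∀ x, |f x| ≤ C) :
    Tendsto (fun k : ℕ => ∫ x, f x ∂(measAct P k μ)) atTop (𝓝 (∫ x, f x ∂μstar)) := by
  have hfm : Measurable f := hf.continuous.measurable
  have hPfm (k : ℕ) : Measurable (funAct P k f) :=
    (hP.stronglyMeasurable_funAct hfm.stronglyMeasurable k).measurable
  have hPfC (k : ℕ) := hP.abs_funAct_le hfC k.cast_nonneg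
  set F : ℕ → S × S → ℝ := fun k z => funAct P k f z.2 - funAct P k f z.1
  have hFm (k : ℕ) : Measurable (F k) :=
    ((hPfm k).comp measurable_snd).sub ((hPfm k).comp measurable_fst)
  have hFC (k : ℕ) (z : S × S) : |F k z| ≤ 2 * C :=
    (abs_sub _ _).trans (by linarith [hPfC k z.1, hPfC k z.2])
  have hF (k : ℕ) :
      ∫ x, f x ∂(measAct P k μ) = ∫ x, f x ∂μstar - ∫ z, F k z ∂(μ.prod μstar) := by
    have := hP.isProbabilityMeasure_measAct k.cast_nonneg μ
    have hint (ν : Measure (S × S)) [IsFiniteMeasure ν] (p : S × S → S) (hp : Measurable p) :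
        Integrable (fun z => funAct P k f (p z)) ν :=
      .of_abs_le ((hPfm k).comp hp).aestronglyMeasurable fun z => hPfC k (p z)
    rw [integral_sub (hint _ _ measurable_snd) (hint _ _ measurable_fst), integral_fun_snd,
      integral_fun_fst]
    simp only [probReal_univ, one_smul]
    rw [hP.integral_funAct_of_invariant hinv hfm hfC k.cast_nonneg,
      ← hP.integral_measAct (.of_abs_le hfm.aestronglyMeasurable hfC)]
    ring
  have hexp : Tendsto (fun k : ℕ => Real.exp (-γ * k)) atTop (𝓝 0) := by
    refine Real.tendsto_exp_atBot.comp ?_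
    exact tendsto_natCast_atTop_atTop.const_mul_atTop_of_neg (by linarith [hA3.2.1])
  have hFlim : Tendsto (fun k => ∫ z, F k z ∂(μ.prod μstar)) atTop (𝓝 0) := by
    have hpt (z : S × S) : Tendsto (fun k => F k z) atTop (𝓝 0) := by
      refine squeeze_zero_norm (fun k => hP.abs_funAct_sub_le hA3 hf k.cast_nonneg z.2 z.1) ?_
      simpa using (hexp.mul_const (dist z.2 z.1)).const_mul (K : ℝ)
    simpa using tendsto_integral_of_dominated_convergence (fun _ => 2 * C)
      (fun k => (hFm k).aestronglyMeasurable) (integrable_const _)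
      (fun k => .of_forall (hFC k)) (.of_forall hpt)
  simp_rw [hF]
  simpa using tendsto_const_nhds.sub hFlim

/-- Truncations `min (d(x₀, ·)) R` are bounded Lipschitz, so their integrals pass to the weak
limit `μstar`; then let `R → ∞` by monotone convergence. -/
lemma lintegral_dist_le_of_invariant (hP : IsMarkovSemigroup P) (hA3 : CondA3 P γ)
    (hinv : ∀ t, 0 ≤ t → measAct P t μstar = μstar) {x₀ : S} {c : ℝ≥0∞}
    (hc : ∀ k : ℕ, ∫⁻ x, ENNReal.ofReal (dist x₀ x) ∂(measAct P k μ) ≤ c) :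
    ∫⁻ x, ENNReal.ofReal (dist x₀ x) ∂μstar ≤ c := by
  set f : ℕ → S → ℝ := fun R x => min (dist x₀ x) R
  have hfm (R : ℕ) : Measurable (f R) :=
    (continuous_const.dist continuous_id).measurable.min measurable_const
  have hf0 (R : ℕ) (x : S) : 0 ≤ f R x := le_min dist_nonneg R.cast_nonneg
  have hfC (R : ℕ) (x : S) : |f R x| ≤ R := by
    rw [abs_of_nonneg (hf0 R x)]
    exact min_le_right _ _
  have hlint (R : ℕ) (ν : Measure S) [IsProbabilityMeasure ν] :
      ∫⁻ x, ENNReal.ofReal (f R x) ∂ν = ENNReal.ofReal (∫ x, f R x ∂ν) :=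
    (ofReal_integral_eq_lintegral_ofReal (.of_abs_le (hfm R).aestronglyMeasurable (hfC R))
      (.of_forall (hf0 R))).symm
  have htrunc (R : ℕ) : ∫⁻ x, ENNReal.ofReal (f R x) ∂μstar ≤ c := by
    rw [hlint R μstar]
    refine le_of_tendsto ((ENNReal.continuous_ofReal.tendsto _).comp
      (hP.tendsto_integral_measAct (μ := μ) hA3 hinv ((LipschitzWith.dist_right x₀).min_const _)
        (hfC R))) (.of_forall fun k => ?_)
    have := hP.isProbabilityMeasure_measAct k.cast_nonneg μ
    rw [Function.comp_apply, ← hlint R]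
    exact (lintegral_mono fun x => ENNReal.ofReal_le_ofReal (min_le_left _ _)).trans (hc k)
  have hsup (x : S) : ⨆ R : ℕ, ENNReal.ofReal (f R x) = ENNReal.ofReal (dist x₀ x) := by
    refine le_antisymm (iSup_le fun R => ENNReal.ofReal_le_ofReal (min_le_left _ _)) ?_
    exact le_iSup_of_le ⌈dist x₀ x⌉₊ (ENNReal.ofReal_le_ofReal (le_min le_rfl (Nat.le_ceil _)))
  have hmono : Monotone fun R x => ENNReal.ofReal (f R x) := fun R R' hRR' x =>
    ENNReal.ofReal_le_ofReal (min_le_min_left _ (by exact_mod_cast hRR'))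
  simp_rw [← hsup]
  rw [lintegral_iSup (f := fun R x => ENNReal.ofReal (f R x))
    (fun R => ENNReal.measurable_ofReal.comp (hfm R)) hmono]
  exact iSup_le htrunc

end IsMarkovSemigroup

lemma ENNReal.ofReal_le_one_add_ofReal_rpow {a ζ : ℝ} (ha : 0 ≤ a) (hζ : 1 ≤ ζ) :
    ENNReal.ofReal a ≤ 1 + ENNReal.ofReal (a ^ ζ) := by
  rw [← ENNReal.ofReal_one, ← ENNReal.ofReal_add zero_le_one (by positivity)]
  refine ENNReal.ofReal_le_ofReal ?_
  rcases le_total a 1 with h | h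
  · linarith [Real.rpow_nonneg ha ζ]
  · linarith [Real.self_le_rpow_of_one_le h hζ]

lemma lintegral_ofReal_le_one_add_rpow {α : Type*} [MeasurableSpace α] {ν : Measure α}
    [IsProbabilityMeasure ν] {f : α → ℝ} (hf : ∀ x, 0 ≤ f x) {ζ : ℝ} (hζ : 1 ≤ ζ) :
    ∫⁻ x, ENNReal.ofReal (f x) ∂ν ≤ 1 + ∫⁻ x, ENNReal.ofReal (f x ^ ζ) ∂ν :=
  calc ∫⁻ x, ENNReal.ofReal (f x) ∂ν ≤ ∫⁻ x, (1 + ENNReal.ofReal (f x ^ ζ)) ∂ν :=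
        lintegral_mono fun x => ENNReal.ofReal_le_one_add_ofReal_rpow (hf x) hζ
    _ = 1 + ∫⁻ x, ENNReal.ofReal (f x ^ ζ) ∂ν := by
        rw [lintegral_add_left measurable_const, lintegral_const, measure_univ, one_mul]

lemma CondA4.exists_lintegral_dist_le {S : Type*} [MetricSpace S] [MeasurableSpace S]
    {P : ℝ → S → Measure S} {μ : Measure S} [IsProbabilityMeasure μ] {x₀ : S} {ζ : ℝ}
    (hP : IsMarkovSemigroup P) (hA4 : CondA4 P μ x₀ ζ) :
    ∃ c : ℝ≥0∞, c ≠ ∞ ∧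
      ∀ t, 0 ≤ t → ∫⁻ x, ENNReal.ofReal (dist x₀ x) ∂(measAct P t μ) ≤ c := by
  obtain ⟨hζ, M, hM⟩ := hA4
  refine ⟨1 + ENNReal.ofReal M, by simp, fun t ht => ?_⟩
  have := hP.isProbabilityMeasure_measAct ht μ
  exact (lintegral_ofReal_le_one_add_rpow (fun _ => dist_nonneg) (by linarith)).trans
    (add_le_add le_rfl (hM t ht))

section FirstMoment

variable {S : Type*} [MetricSpace S] [MeasurableSpace S] [OpensMeasurableSpace S]

lemma integrable_dist_of_lintegral_le {ν : Measure S} {x₀ : S} {c : ℝ≥0∞} (hc : c ≠ ∞)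
    (h : ∫⁻ x, ENNReal.ofReal (dist x₀ x) ∂ν ≤ c) :
    Integrable (fun x => dist x₀ x) ν ∧ ∫ x, dist x₀ x ∂ν ≤ c.toReal := by
  have hm : AEStronglyMeasurable (fun x => dist x₀ x) ν :=
    (continuous_const.dist continuous_id).aestronglyMeasurable
  refine ⟨⟨hm, (hasFiniteIntegral_iff_ofReal (.of_forall fun _ => dist_nonneg)).2
    (h.trans_lt hc.lt_top)⟩, ?_⟩
  rw [integral_eq_lintegral_of_nonneg_ae (.of_forall fun _ => dist_nonneg) hm]
  exact ENNReal.toReal_mono hc h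

/-- `P_t f x = ∫ (P_t f x - P_t f y) dμstar(y)`, since `∫ P_t f dμstar = ∫ f dμstar = 0`. -/
lemma IsMarkovSemigroup.abs_funAct_le_of_integral_eq_zero {P : ℝ → S → Measure S} {γ t : ℝ}
    {f : S → ℝ} {K : ℝ≥0} {μstar : Measure S} [IsProbabilityMeasure μstar]
    (hP : IsMarkovSemigroup P) (hA3 : CondA3 P γ)
    (hinv : ∀ t, 0 ≤ t → measAct P t μstar = μstar) (hf : LipschitzWith K f) {C : ℝ}
    (hfC : ∀ x, |f x| ≤ C) (hmean : ∫ x, f x ∂μstar = 0) {x₀ : S}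
    (hm : Integrable (fun y => dist x₀ y) μstar) (ht : 0 ≤ t) (x : S) :
    |funAct P t f x| ≤ Real.exp (-γ * t) * (K * (dist x₀ x + ∫ y, dist x₀ y ∂μstar)) := by
  have hfm : Measurable f := hf.continuous.measurable
  have hPf : Integrable (funAct P t f) μstar :=
    .of_abs_le (hP.stronglyMeasurable_funAct hfm.stronglyMeasurable t).aestronglyMeasurable
      (hP.abs_funAct_le hfC ht)
  have hrep : funAct P t f x = ∫ y, (funAct P t f x - funAct P t f y) ∂μstar := by
    rw [integral_sub (integrable_const _) hPf, hP.integral_funAct_of_invariant hinv hfm hfC ht,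
      hmean]
    simp
  rw [hrep, ← Real.norm_eq_abs]
  calc ‖∫ y, (funAct P t f x - funAct P t f y) ∂μstar‖
      ≤ ∫ y, Real.exp (-γ * t) * (K * (dist x₀ x + dist x₀ y)) ∂μstar := by
        refine norm_integral_le_of_norm_le
          (((integrable_const _).add hm).const_mul _ |>.const_mul _) (.of_forall fun y => ?_)
        calc ‖funAct P t f x - funAct P t f y‖ ≤ K * (Real.exp (-γ * t) * dist x y) :=
              hP.abs_funAct_sub_le hA3 hf ht x y
          _ ≤ K * (Real.exp (-γ * t) * (dist x₀ x + dist x₀ y)) := by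
              gcongr
              exact dist_triangle_left x y x₀
          _ = Real.exp (-γ * t) * (K * (dist x₀ x + dist x₀ y)) := by ring
    _ = Real.exp (-γ * t) * (K * (dist x₀ x + ∫ y, dist x₀ y ∂μstar)) := by
        rw [integral_const_mul, integral_const_mul, integral_add (integrable_const _) hm,
          integral_const, probReal_univ, one_smul]

end FirstMoment

section MarkovProcess

variable {S : Type*} [MeasurableSpace S] {P : ℝ → S → Measure S} {Φ : ℝ → Ω → S}
  {ℙμ : Measure Ω} {μ : Measure S} {s t : ℝ}

namespace IsMarkovProcess

lemma measurable_apply (hΦ : IsMarkovProcess P Φ ℙμ μ) (t : ℝ) : Measurable (Φ t) :=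
  hΦ.jointMeas.comp (measurable_const.prodMk measurable_id)

lemma natFiltration_le (hΦ : IsMarkovProcess P Φ ℙμ μ) (s : ℝ) :
    natFiltration Φ s ≤ ‹MeasurableSpace Ω› :=
  iSup₂_le fun u _ => (hΦ.measurable_apply u).comap_le

lemma integral_mul_comp_eq (hΦ : IsMarkovProcess P Φ ℙμ μ) [IsFiniteMeasure ℙμ] {h f : S → ℝ}
    (hh : Measurable h) {C : ℝ} (hhC : ∀ x, |h x| ≤ C) (hf : Measurable f) {C' : ℝ}
    (hfC : ∀ x, |f x| ≤ C') (hs : 0 ≤ s) (hst : s ≤ t) :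
    ∫ ω, h (Φ s ω) * f (Φ t ω) ∂ℙμ = ∫ ω, h (Φ s ω) * funAct P (t - s) f (Φ s ω) ∂ℙμ := by
  have hmarkov := hΦ.markov f hf ⟨C', hfC⟩ s (t - s) hs (sub_nonneg.2 hst)
  rw [add_sub_cancel] at hmarkov
  have hhΦ : StronglyMeasurable[natFiltration Φ s] fun ω => h (Φ s ω) :=
    (hh.comp (Measurable.of_comap_le (le_iSup₂ (f := fun u (_ : u ∈ Set.Icc (0 : ℝ) s) =>
      MeasurableSpace.comap (Φ u) inferInstance) s ⟨hs, le_rfl⟩))).stronglyMeasurable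
  have hfΦ : Integrable (fun ω => f (Φ t ω)) ℙμ :=
    .of_abs_le (hf.comp (hΦ.measurable_apply t)).aestronglyMeasurable fun ω => hfC _
  have hhfΦ : Integrable ((fun ω => h (Φ s ω)) * fun ω => f (Φ t ω)) ℙμ :=
    hfΦ.bdd_mul (hh.comp (hΦ.measurable_apply s)).aestronglyMeasurable (.of_forall fun ω => hhC _)
  calc ∫ ω, h (Φ s ω) * f (Φ t ω) ∂ℙμ
      = ∫ ω, (ℙμ[(fun ω => h (Φ s ω)) * fun ω => f (Φ t ω) | natFiltration Φ s]) ω ∂ℙμ :=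
        (integral_condExp (hΦ.natFiltration_le s)).symm
    _ = ∫ ω, ((fun ω => h (Φ s ω)) * ℙμ[fun ω => f (Φ t ω) | natFiltration Φ s]) ω ∂ℙμ :=
        integral_congr_ae (condExp_mul_of_stronglyMeasurable_left hhΦ hhfΦ hfΦ)
    _ = ∫ ω, h (Φ s ω) * funAct P (t - s) f (Φ s ω) ∂ℙμ :=
        integral_congr_ae (hmarkov.mono fun ω hω => by simp only [Pi.mul_apply, hω])

lemma abs_integral_mul_le (hΦ : IsMarkovProcess P Φ ℙμ μ) [IsProbabilityMeasure ℙμ]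
    {g : S → ℝ} (hg : Measurable g) {C : ℝ} (hgC : ∀ x, |g x| ≤ C) {V : S → ℝ} {B γ : ℝ}
    (hdecay : ∀ u, 0 ≤ u → ∀ x, |funAct P u g x| ≤ Real.exp (-γ * u) * V x)
    (hV : ∀ s, 0 ≤ s → Integrable V (measAct P s μ) ∧ ∫ x, V x ∂(measAct P s μ) ≤ B)
    (hs : 0 ≤ s) (ht : 0 ≤ t) :
    |∫ ω, g (Φ s ω) * g (Φ t ω) ∂ℙμ| ≤ C * B * Real.exp (-γ * |s - t|) := by
  wlog hst : s ≤ t generalizing s t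
  · simpa only [mul_comm (g (Φ s _)), abs_sub_comm s] using this ht hs (not_le.1 hst).le
  obtain ⟨ω₀⟩ := nonempty_of_isProbabilityMeasure ℙμ
  have hC : 0 ≤ C := (abs_nonneg _).trans (hgC (Φ s ω₀))
  have hmap := hΦ.law s hs
  obtain ⟨hVint, hVle⟩ := hV s hs
  rw [← hmap] at hVint hVle
  rw [integral_map (hΦ.measurable_apply s).aemeasurable hVint.aestronglyMeasurable] at hVle
  have hVΦ := hVint.comp_measurable (hΦ.measurable_apply s)
  rw [hΦ.integral_mul_comp_eq hg hgC hg hgC hs hst, abs_sub_comm,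
    abs_of_nonneg (sub_nonneg.2 hst), ← Real.norm_eq_abs]
  calc ‖∫ ω, g (Φ s ω) * funAct P (t - s) g (Φ s ω) ∂ℙμ‖
      ≤ ∫ ω, C * (Real.exp (-γ * (t - s)) * V (Φ s ω)) ∂ℙμ := by
        refine norm_integral_le_of_norm_le ((hVΦ.const_mul _).const_mul _)
          (.of_forall fun ω => ?_)
        exact abs_mul_le_of_abs_le (hgC _) (hdecay _ (sub_nonneg.2 hst) _)
    _ = C * Real.exp (-γ * (t - s)) * ∫ ω, V (Φ s ω) ∂ℙμ := by
        rw [integral_const_mul, integral_const_mul, mul_assoc]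
    _ ≤ C * Real.exp (-γ * (t - s)) * B :=
        mul_le_mul_of_nonneg_left hVle (by positivity)
    _ = C * B * Real.exp (-γ * (t - s)) := by ring

end IsMarkovProcess

end MarkovProcess

section SecondMoment

lemma integrable_exp_neg_mul_abs {γ : ℝ} (hγ : 0 < γ) :
    Integrable fun u : ℝ => Real.exp (-γ * |u|) := by
  have hIic : IntegrableOn (fun u : ℝ => Real.exp (-γ * |u|)) (Iic 0) :=
    (integrableOn_exp_mul_Iic hγ 0).congr_fun (fun u hu => by
      rw [abs_of_nonpos hu, neg_mul_neg]) measurableSet_Iic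
  have hIoi : IntegrableOn (fun u : ℝ => Real.exp (-γ * |u|)) (Ioi 0) :=
    (integrableOn_exp_mul_Ioi (neg_lt_zero.2 hγ) 0).congr_fun (fun u hu => by
      rw [abs_of_pos hu]) measurableSet_Ioi
  simpa [Iic_union_Ioi] using hIic.union hIoi

lemma integral_exp_neg_mul_abs {γ : ℝ} (hγ : 0 < γ) :
    ∫ u : ℝ, Real.exp (-γ * |u|) = 2 / γ := by
  rw [integral_comp_abs (f := fun u => Real.exp (-γ * u)),
    integral_exp_mul_Ioi (neg_lt_zero.2 hγ)]
  field_simp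
  simp

lemma setIntegral_exp_neg_mul_abs_sub_le {γ : ℝ} (hγ : 0 < γ) (s : ℝ) (A : Set ℝ) :
    ∫ u in A, Real.exp (-γ * |s - u|) ≤ 2 / γ := by
  rw [← integral_exp_neg_mul_abs hγ,
    ← integral_sub_left_eq_self (fun u => Real.exp (-γ * |u|)) volume s]
  exact setIntegral_le_integral ((integrable_exp_neg_mul_abs hγ).comp_sub_left s)
    (.of_forall fun _ => (Real.exp_pos _).le)

variable {ι : Type*} [MeasurableSpace ι] {ν : Measure ι} [IsFiniteMeasure ν]
  {ℙμ : Measure Ω} [IsFiniteMeasure ℙμ] {Y : ι → Ω → ℝ} {C : ℝ}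

lemma integrable_sq_integral (hY : Measurable fun p : ι × Ω => Y p.1 p.2)
    (hYC : ∀ s ω, |Y s ω| ≤ C) : Integrable (fun ω => (∫ s, Y s ω ∂ν) ^ 2) ℙμ := by
  refine .of_abs_le ((hY.stronglyMeasurable.integral_prod_left' (μ := ν)).measurable.pow_const 2
    |>.aestronglyMeasurable) (C := (C * ν.real univ) ^ 2) fun ω => ?_
  rw [abs_pow]
  refine pow_le_pow_left₀ (abs_nonneg _) ?_ 2
  simpa using norm_integral_le_of_norm_le_const (μ := ν)
    (.of_forall fun s => (Real.norm_eq_abs _).trans_le (hYC s ω))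

lemma integral_sq_integral_eq (hY : Measurable fun p : ι × Ω => Y p.1 p.2)
    (hYC : ∀ s ω, |Y s ω| ≤ C) :
    ∫ ω, (∫ s, Y s ω ∂ν) ^ 2 ∂ℙμ = ∫ z, ∫ ω, Y z.1 ω * Y z.2 ω ∂ℙμ ∂(ν.prod ν) := by
  have hm : Measurable fun q : Ω × (ι × ι) => Y q.2.1 q.1 * Y q.2.2 q.1 :=
    (hY.comp ((measurable_fst.comp measurable_snd).prodMk measurable_fst)).mul
      (hY.comp ((measurable_snd.comp measurable_snd).prodMk measurable_fst))
  have hint : Integrable (Function.uncurry fun ω (z : ι × ι) => Y z.1 ω * Y z.2 ω)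
      (ℙμ.prod (ν.prod ν)) :=
    .of_abs_le hm.aestronglyMeasurable fun q => abs_mul_le_of_abs_le (hYC _ _) (hYC _ _)
  simp_rw [sq, ← integral_prod_mul (μ := ν) (ν := ν) (fun s => Y s _) (fun s => Y s _)]
  exact integral_integral_swap hint

lemma integral_sq_setIntegral_le {Y : ℝ → Ω → ℝ} (hY : Measurable fun p : ℝ × Ω => Y p.1 p.2)
    (hYC : ∀ s ω, |Y s ω| ≤ C) {γ A L : ℝ} (hγ : 0 < γ) (hA : 0 ≤ A) (hL : 0 ≤ L)
    (hcov : ∀ s t, 0 ≤ s → 0 ≤ t → ∫ ω, Y s ω * Y t ω ∂ℙμ ≤ A * Real.exp (-γ * |s - t|)) :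
    ∫ ω, (∫ s in Ioc 0 L, Y s ω) ^ 2 ∂ℙμ ≤ A * (2 / γ) * L := by
  set ν := volume.restrict (Ioc (0 : ℝ) L)
  have : IsFiniteMeasure ν := isFiniteMeasure_restrict.2 measure_Ioc_lt_top.ne
  have hexp : Continuous fun z : ℝ × ℝ => Real.exp (-γ * |z.1 - z.2|) := by fun_prop
  have hexp1 (z : ℝ × ℝ) : |Real.exp (-γ * |z.1 - z.2|)| ≤ 1 := by
    rw [abs_of_pos (Real.exp_pos _), Real.exp_le_one_iff]
    nlinarith [abs_nonneg (z.1 - z.2)]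
  have hcovm : Measurable fun z : ℝ × ℝ => ∫ ω, Y z.1 ω * Y z.2 ω ∂ℙμ :=
    ((hY.comp ((measurable_fst.comp measurable_fst).prodMk measurable_snd)).mul
      (hY.comp ((measurable_snd.comp measurable_fst).prodMk measurable_snd))
      |>.stronglyMeasurable.integral_prod_right' (ν := ℙμ)).measurable
  have hcovC (z : ℝ × ℝ) : |∫ ω, Y z.1 ω * Y z.2 ω ∂ℙμ| ≤ C * C * ℙμ.real univ := by
    rw [← Real.norm_eq_abs]
    exact norm_integral_le_of_norm_le_const
      (.of_forall fun ω => abs_mul_le_of_abs_le (hYC _ _) (hYC _ _))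
  have hae : ∀ᵐ z ∂(ν.prod ν),
      ∫ ω, Y z.1 ω * Y z.2 ω ∂ℙμ ≤ A * Real.exp (-γ * |z.1 - z.2|) := by
    rw [Measure.prod_restrict]
    filter_upwards [ae_restrict_mem (measurableSet_Ioc.prod measurableSet_Ioc)] with z hz
    exact hcov _ _ hz.1.1.le hz.2.1.le
  rw [integral_sq_integral_eq (ν := ν) hY hYC]
  calc ∫ z, ∫ ω, Y z.1 ω * Y z.2 ω ∂ℙμ ∂(ν.prod ν)
      ≤ ∫ z, A * Real.exp (-γ * |z.1 - z.2|) ∂(ν.prod ν) :=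
        integral_mono_ae (.of_abs_le hcovm.aestronglyMeasurable hcovC)
          ((Integrable.of_abs_le hexp.aestronglyMeasurable hexp1).const_mul A) hae
    _ = A * ∫ s, ∫ t, Real.exp (-γ * |s - t|) ∂ν ∂ν := by
        rw [integral_const_mul, integral_prod _ (.of_abs_le hexp.aestronglyMeasurable hexp1)]
    _ ≤ A * ∫ _s, 2 / γ ∂ν := by
        refine mul_le_mul_of_nonneg_left (integral_mono_of_nonneg (.of_forall fun s =>
          integral_nonneg fun t => (Real.exp_pos _).le) (integrable_const _) ?_) hA
        exact .of_forall fun s => setIntegral_exp_neg_mul_abs_sub_le hγ s _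
    _ = A * (2 / γ) * L := by
        simp [ν, Measure.real, hL]
        ring

end SecondMoment

theorem second_moment_linear_bound_general
    (P : ℝ → X → Measure X) (hP : IsMarkovSemigroup P)
    (γ ζ : ℝ) (x₀ : X) (μ μstar : Measure X)
    [IsProbabilityMeasure μ] [IsProbabilityMeasure μstar]
    (hA3 : CondA3 P γ) (hA4 : CondA4 P μ x₀ ζ)
    (hinv : ∀ t, 0 ≤ t → measAct P t μstar = μstar)
    (g : X → ℝ) (K : ℝ≥0) (hLip : LipschitzWith K g) (hBd : ∃ C, ∀ x, |g x| ≤ C)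
    (hmean : ∫ x, g x ∂μstar = 0)
    (ℙμ : Measure Ω) [IsProbabilityMeasure ℙμ]
    (Φ : ℝ → Ω → X) (hΦ : IsMarkovProcess P Φ ℙμ μ) :
    ∃ D : ℝ, ∀ n : ℕ, 0 < n →
      Integrable (fun ω => (addFun g Φ (n : ℝ) ω) ^ 2) ℙμ ∧
      (∫ ω, (addFun g Φ (n : ℝ) ω) ^ 2 ∂ℙμ) ≤ D * n := by
  obtain ⟨c, hc, hμP⟩ := hA4.exists_lintegral_dist_le hP
  obtain ⟨C, hC⟩ := hBd
  have hm := (integrable_dist_of_lintegral_le hc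
    (hP.lintegral_dist_le_of_invariant hA3 hinv fun k => hμP k k.cast_nonneg)).1
  set m := ∫ y, dist x₀ y ∂μstar
  have hV (s : ℝ) (hs : 0 ≤ s) :
      Integrable (fun x => K * (dist x₀ x + m)) (measAct P s μ) ∧
        ∫ x, K * (dist x₀ x + m) ∂(measAct P s μ) ≤ K * (c.toReal + m) := by
    have := hP.isProbabilityMeasure_measAct hs μ
    obtain ⟨hint, hle⟩ := integrable_dist_of_lintegral_le hc (hμP s hs)
    refine ⟨(hint.add (integrable_const m)).const_mul K, ?_⟩
    rw [integral_const_mul, integral_add hint (integrable_const m), integral_const,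
      probReal_univ, one_smul]
    gcongr
  have hgm : Measurable g := hLip.continuous.measurable
  have hcov (s t : ℝ) (hs : 0 ≤ s) (ht : 0 ≤ t) : |∫ ω, g (Φ s ω) * g (Φ t ω) ∂ℙμ| ≤
      C * (K * (c.toReal + m)) * Real.exp (-γ * |s - t|) :=
    hΦ.abs_integral_mul_le hgm hC (fun u hu x =>
      hP.abs_funAct_le_of_integral_eq_zero hA3 hinv hLip hC hmean hm hu x) hV hs ht
  have hC0 : 0 ≤ C := (abs_nonneg _).trans (hC x₀)
  have hm0 : 0 ≤ m := integral_nonneg fun _ => dist_nonneg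
  have hY : Measurable fun p : ℝ × Ω => g (Φ p.1 p.2) := hgm.comp hΦ.jointMeas
  refine ⟨C * (K * (c.toReal + m)) * (2 / γ), fun n _ => ?_⟩
  simp_rw [addFun, intervalIntegral.integral_of_le n.cast_nonneg]
  exact ⟨integrable_sq_integral hY (fun _ _ => hC _), integral_sq_setIntegral_le hY
    (fun _ _ => hC _) hA3.2.1 (by positivity) n.cast_nonneg
    fun s t hs ht => (le_abs_self _).trans (hcov s t hs ht)⟩

/-- Under (A2)–(A4) there is a finite constant `D` such that
`E_μ[I_n(g)²] ≤ D·n` for every positive integer `n`. -/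
theorem second_moment_linear_bound
    (P : ℝ → X → Measure X) (hP : IsMarkovSemigroup P)
    (γ ζ : ℝ) (x₀ : X) (μ μstar : Measure X)
    [IsProbabilityMeasure μ] [IsProbabilityMeasure μstar]
    (hA2 : CondA2 P) (hA3 : CondA3 P γ) (hA4 : CondA4 P μ x₀ ζ)
    (hinv : ∀ t, 0 ≤ t → measAct P t μstar = μstar)
    (g : X → ℝ) (K : ℝ≥0) (hLip : LipschitzWith K g) (hBd : ∃ C, ∀ x, |g x| ≤ C)
    (hmean : ∫ x, g x ∂μstar = 0)
    (ℙμ : Measure Ω) [IsProbabilityMeasure ℙμ]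
    (Φ : ℝ → Ω → X) (hΦ : IsMarkovProcess P Φ ℙμ μ) :
    ∃ D : ℝ, ∀ n : ℕ, 0 < n →
      Integrable (fun ω => (addFun g Φ (n : ℝ) ω) ^ 2) ℙμ ∧
      (∫ ω, (addFun g Φ (n : ℝ) ω) ^ 2 ∂ℙμ) ≤ D * n :=
  second_moment_linear_bound_general P hP γ ζ x₀ μ μstar hA3 hA4 hinv g K hLip hBd hmean ℙμ Φ hΦ
end
end

section
/- Assume condition (A3). Let n ≥ 2, let f : Xⁿ → ℝ be bounded Borel measurable such that for each j ∈ {1,…,n} the map x ↦ f(x₁,…,x_{j−1},x,x_{j+1},…,x_n) is Lipschitz with a constant Lip_j f < ∞ independent of the other (fixed) coordinates, and let 0 < s₁ < s₂ < … < s_n. Define F : X → ℝ by the nested kernel integral F(x) := ∫_X … ∫_X f(x₁,…,x_n) P_{s_n−s_{n−1}}(x_{n−1},dx_n) ⋯ P_{s₂−s₁}(x₁,dx₂) P_{s₁}(x,dx₁) (which equals E_x[f(Φ_{s₁},…,Φ_{s_n})] for the associated Markov process). Then F is Lipschitz with Lip F ≤ Σ_{j=1}^n (Lip_j f) e^{−γ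 s_j}. -/
open MeasureTheory Filter Set
open scoped ENNReal Topology NNReal

noncomputable section

variable {X : Type*} [MetricSpace X] [CompleteSpace X] [SecondCountableTopology X]
  [MeasurableSpace X] [BorelSpace X]

variable {Ω : Type*} [MeasurableSpace Ω]

/-- The nested kernel integral
`x ↦ ∫⋯∫ f(x₁,…,x_n) P_{d_n}(x_{n-1},dx_n) ⋯ P_{d₂}(x₁,dx₂) P_{d₁}(x,dx₁)`,
where `d j` are the consecutive time increments. -/
def nestedInt (P : ℝ → X → Measure X) :
    (n : ℕ) → (Fin n → ℝ) → ((Fin n → X) → ℝ) → X → ℝ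
  | 0, _, f, _ => f Fin.elim0
  | n + 1, d, f, x =>
      ∫ y, nestedInt P n (Fin.tail d) (fun v => f (Fin.cons y v)) y ∂(P (d 0) x)

namespace NestedAux

open ProbabilityTheory

lemma measurable_P {P : ℝ → X → Measure X} (hP : IsMarkovSemigroup P) (t : ℝ) :
    Measurable (P t) := by
  apply Measure.measurable_of_measurable_coe
  intro A hA
  exact (hP.jointMeas A hA).comp (measurable_const.prodMk measurable_id)

/-- The transition kernel at time `t`. -/
def ker {P : ℝ → X → Measure X} (hP : IsMarkovSemigroup P) (t : ℝ) : Kernel X X :=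
  ⟨P t, measurable_P hP t⟩

lemma measurable_cons {n : ℕ} :
    Measurable (fun q : X × (Fin n → X) => (Fin.cons q.1 q.2 : Fin (n+1) → X)) := by
  rw [measurable_pi_iff]
  intro i
  refine Fin.cases ?_ ?_ i
  · simp only [Fin.cons_zero]
    exact measurable_fst
  · intro j
    simp only [Fin.cons_succ]
    exact (measurable_pi_apply j).comp measurable_snd

lemma key_meas {P : ℝ → X → Measure X} (hP : IsMarkovSemigroup P) :
    ∀ (n m : ℕ) (d : Fin n → ℝ), (∀ j, 0 ≤ d j) →
      ∀ (F : (Fin m → X) × (Fin n → X) → ℝ), Measurable F →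
      Measurable (fun p : (Fin m → X) × X => nestedInt P n d (fun v => F (p.1, v)) p.2) := by
  intro n
  induction n with
  | zero =>
      intro m d _ F hF
      simp only [nestedInt]
      exact hF.comp (measurable_fst.prodMk measurable_const)
  | succ n ih =>
      intro m d hd F hF
      simp only [nestedInt]
      haveI hmk : IsMarkovKernel (ker hP (d 0)) := ⟨fun x => hP.prob _ (hd 0) x⟩
      have hsnoc : Measurable
          (fun q : ((Fin m → X) × X) × X => (Fin.snoc q.1.1 q.2 : Fin (m+1) → X)) := by
        rw [measurable_pi_iff]
        intro i
        refine Fin.lastCases ?_ ?_ i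
        · simp only [Fin.snoc_last]
          exact measurable_snd
        · intro j
          simp only [Fin.snoc_castSucc]
          exact (measurable_pi_apply j).comp (measurable_fst.comp measurable_fst)
      have hF' : Measurable (fun r : (Fin (m+1) → X) × (Fin n → X) =>
          F ((fun i => r.1 i.castSucc), Fin.cons (r.1 (Fin.last m)) r.2)) := by
        refine hF.comp (Measurable.prodMk ?_ ?_)
        · exact measurable_pi_lambda _ fun i => (measurable_pi_apply _).comp measurable_fst
        · exact measurable_cons.comp
            (((measurable_pi_apply _).comp measurable_fst).prodMk measurable_snd)
      have h1 := ih (m+1) (Fin.tail d) (fun j => hd j.succ)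
        (fun r : (Fin (m+1) → X) × (Fin n → X) =>
          F ((fun i => r.1 i.castSucc), Fin.cons (r.1 (Fin.last m)) r.2)) hF'
      have h2 : Measurable (fun q : ((Fin m → X) × X) × X =>
          nestedInt P n (Fin.tail d) (fun v => F (q.1.1, Fin.cons q.2 v)) q.2) := by
        have hmap : Measurable (fun q : ((Fin m → X) × X) × X =>
            ((Fin.snoc q.1.1 q.2 : Fin (m+1) → X), q.2)) := hsnoc.prodMk measurable_snd
        have h3 : Measurable fun q : ((Fin m → X) × X) × X =>
            nestedInt P n (Fin.tail d)
              (fun v => F ((fun i => (Fin.snoc q.1.1 q.2 : Fin (m+1) → X) i.castSucc),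
                Fin.cons ((Fin.snoc q.1.1 q.2 : Fin (m+1) → X) (Fin.last m)) v)) q.2 :=
          h1.comp hmap
        simpa [Fin.snoc_castSucc, Fin.snoc_last] using h3
      exact (h2.stronglyMeasurable.integral_kernel_prod_right'
        (κ := (ker hP (d 0)).comap Prod.snd measurable_snd)).measurable

/-- The inner-integrand measurability we actually use. -/
lemma key_meas' {P : ℝ → X → Measure X} (hP : IsMarkovSemigroup P)
    (n : ℕ) (d : Fin n → ℝ) (hd : ∀ j, 0 ≤ d j)
    (g : (Fin (n+1) → X) → ℝ) (hg : Measurable g) :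
    Measurable (fun y : X => nestedInt P n d (fun v => g (Fin.cons y v)) y) := by
  have hF : Measurable (fun q : (Fin 1 → X) × (Fin n → X) => g (Fin.cons (q.1 0) q.2)) :=
    hg.comp (measurable_cons.comp
      (((measurable_pi_apply 0).comp measurable_fst).prodMk measurable_snd))
  have h1 := key_meas hP n 1 d hd _ hF
  have hmap : Measurable (fun y : X => ((fun _ : Fin 1 => y, y) : (Fin 1 → X) × X)) :=
    (measurable_pi_lambda _ fun _ => measurable_id).prodMk measurable_id
  exact h1.comp hmap

lemma key_bound {P : ℝ → X → Measure X} (hP : IsMarkovSemigroup P) :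
    ∀ (n : ℕ) (d : Fin n → ℝ), (∀ j, 0 ≤ d j) → ∀ (f : (Fin n → X) → ℝ) (C : ℝ),
      (∀ v, |f v| ≤ C) → ∀ x, |nestedInt P n d f x| ≤ C := by
  intro n
  induction n with
  | zero => intro d _ f C hC x; exact hC _
  | succ n ih =>
      intro d hd f C hC x
      haveI : IsProbabilityMeasure (P (d 0) x) := hP.prob _ (hd 0) x
      have h := norm_integral_le_of_norm_le_const (μ := P (d 0) x)
        (f := fun y => nestedInt P n (Fin.tail d) (fun v => f (Fin.cons y v)) y) (C := C)
        (Filter.Eventually.of_forall fun y => by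
          simpa [Real.norm_eq_abs] using
            ih (Fin.tail d) (fun j => hd j.succ) _ C (fun v => hC _) y)
      simpa [nestedInt, Real.norm_eq_abs, measure_univ] using h

lemma key_diff {P : ℝ → X → Measure X} (hP : IsMarkovSemigroup P) :
    ∀ (n : ℕ) (d : Fin n → ℝ), (∀ j, 0 ≤ d j) →
      ∀ (f₁ f₂ : (Fin n → X) → ℝ), Measurable f₁ → Measurable f₂ →
      ∀ (C : ℝ), (∀ v, |f₁ v| ≤ C) → (∀ v, |f₂ v| ≤ C) →
      ∀ (c : ℝ), (∀ v, |f₁ v - f₂ v| ≤ c) → ∀ x,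
        |nestedInt P n d f₁ x - nestedInt P n d f₂ x| ≤ c := by
  intro n
  induction n with
  | zero => intro d _ f₁ f₂ _ _ C _ _ c hc x; exact hc _
  | succ n ih =>
      intro d hd f₁ f₂ hm₁ hm₂ C hb₁ hb₂ c hc x
      haveI : IsProbabilityMeasure (P (d 0) x) := hP.prob _ (hd 0) x
      have hmeas : ∀ (g : (Fin (n+1) → X) → ℝ), Measurable g →
          Measurable (fun y => nestedInt P n (Fin.tail d) (fun v => g (Fin.cons y v)) y) :=
        fun g hg => key_meas' hP n (Fin.tail d) (fun j => hd j.succ) g hg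
      have hint : ∀ (g : (Fin (n+1) → X) → ℝ), Measurable g → (∀ v, |g v| ≤ C) →
          Integrable (fun y => nestedInt P n (Fin.tail d) (fun v => g (Fin.cons y v)) y)
            (P (d 0) x) := by
        intro g hg hgb
        refine (integrable_const C).mono' ((hmeas g hg).aestronglyMeasurable) ?_
        exact Filter.Eventually.of_forall fun y => by
          simpa [Real.norm_eq_abs] using
            key_bound hP n (Fin.tail d) (fun j => hd j.succ) _ C (fun v => hgb _) y
      have e1 := hint f₁ hm₁ hb₁
      have e2 := hint f₂ hm₂ hb₂
      have hmc : ∀ y : X, Measurable (fun v : Fin n → X => f₁ (Fin.cons y v)) := fun y =>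
        hm₁.comp (measurable_cons.comp (measurable_const.prodMk measurable_id))
      have hmc₂ : ∀ y : X, Measurable (fun v : Fin n → X => f₂ (Fin.cons y v)) := fun y =>
        hm₂.comp (measurable_cons.comp (measurable_const.prodMk measurable_id))
      have h := norm_integral_le_of_norm_le_const (μ := P (d 0) x)
        (f := fun y => nestedInt P n (Fin.tail d) (fun v => f₁ (Fin.cons y v)) y
          - nestedInt P n (Fin.tail d) (fun v => f₂ (Fin.cons y v)) y) (C := c)
        (Filter.Eventually.of_forall fun y => by
          simpa [Real.norm_eq_abs] using
            ih (Fin.tail d) (fun j => hd j.succ) _ _ (hmc y) (hmc₂ y) C (fun v => hb₁ _)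
              (fun v => hb₂ _) c (fun v => hc _) y)
      rw [integral_sub e1 e2] at h
      simpa [nestedInt, Real.norm_eq_abs, measure_univ] using h

lemma bddAbove_wass {μ ν : Measure X} [IsProbabilityMeasure μ] [IsProbabilityMeasure ν]
    (hμ : FiniteFirstMoment μ) (hν : FiniteFirstMoment ν) (x₀ : X) :
    BddAbove {r | ∃ f : X → ℝ, LipschitzWith 1 f ∧ r = |(∫ x, f x ∂μ) - ∫ x, f x ∂ν|} := by
  refine ⟨(∫ x, dist x₀ x ∂μ) + ∫ x, dist x₀ x ∂ν, ?_⟩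
  rintro r ⟨f, hf, rfl⟩
  have key : ∀ (ρ : Measure X), IsProbabilityMeasure ρ → Integrable (fun x => dist x₀ x) ρ →
      |(∫ x, f x ∂ρ) - f x₀| ≤ ∫ x, dist x₀ x ∂ρ := by
    intro ρ hρ hρi
    haveI := hρ
    have hdf : ∀ z, |f z - f x₀| ≤ dist x₀ z := by
      intro z
      calc |f z - f x₀| = dist (f z) (f x₀) := (Real.dist_eq _ _).symm
        _ ≤ 1 * dist z x₀ := hf.dist_le_mul z x₀
        _ = dist x₀ z := by rw [one_mul, dist_comm]
    have hfint : Integrable f ρ := by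
      refine (hρi.add (integrable_const |f x₀|)).mono'
        hf.continuous.aestronglyMeasurable ?_
      refine Filter.Eventually.of_forall fun z => ?_
      have h1 : |f z| - |f x₀| ≤ |f z - f x₀| := abs_sub_abs_le_abs_sub _ _
      have h2 := hdf z
      rw [Real.norm_eq_abs]
      simp only [Pi.add_apply]
      linarith
    have h2 : (∫ x, f x ∂ρ) - f x₀ = ∫ x, (f x - f x₀) ∂ρ := by
      rw [integral_sub hfint (integrable_const _), integral_const]
      simp [measure_univ]
    rw [h2]
    calc |∫ x, (f x - f x₀) ∂ρ| ≤ ∫ x, |f x - f x₀| ∂ρ := by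
          simpa [Real.norm_eq_abs] using
            norm_integral_le_integral_norm (μ := ρ) (f := fun x => f x - f x₀)
      _ ≤ ∫ x, dist x₀ x ∂ρ :=
          integral_mono (hfint.sub (integrable_const _)).abs hρi fun z => hdf z
  have k1 := key μ inferInstance (hμ x₀)
  have k2 := key ν inferInstance (hν x₀)
  have h3 : |(∫ x, f x ∂μ) - ∫ x, f x ∂ν| ≤
      |(∫ x, f x ∂μ) - f x₀| + |(∫ x, f x ∂ν) - f x₀| := by
    have := abs_sub_le (∫ x, f x ∂μ) (f x₀) (∫ x, f x ∂ν)
    rw [abs_sub_comm (f x₀) (∫ x, f x ∂ν)] at this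
    exact this
  linarith

lemma ffm_P {P : ℝ → X → Measure X} (hP : IsMarkovSemigroup P) {γ : ℝ}
    (hA3 : CondA3 P γ) {t : ℝ} (ht : 0 < t) (z : X) : FiniteFirstMoment (P t z) := by
  have hd : FiniteFirstMoment (Measure.dirac z : Measure X) := by
    intro x₀
    refine (integrable_const (dist x₀ z)).congr ?_
    rw [Filter.EventuallyEq, MeasureTheory.ae_dirac_eq]
    exact Filter.eventually_pure.2 rfl
  have := hA3.1 (Measure.dirac z) inferInstance hd t ht
  simp only [measAct] at this
  rwa [Measure.dirac_bind (measurable_P hP t)] at this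

lemma wass_step {P : ℝ → X → Measure X} (hP : IsMarkovSemigroup P) {γ : ℝ}
    (hA3 : CondA3 P γ) {t : ℝ} (ht : 0 < t) (g : X → ℝ) (K : ℝ) (hK : 0 ≤ K)
    (hgl : ∀ a b, |g a - g b| ≤ K * dist a b) (x y : X) :
    |(∫ z, g z ∂(P t x)) - ∫ z, g z ∂(P t y)| ≤ K * (Real.exp (-γ * t) * dist x y) := by
  haveI hx : IsProbabilityMeasure (P t x) := hP.prob t ht.le x
  haveI hy : IsProbabilityMeasure (P t y) := hP.prob t ht.le y
  rcases hK.eq_or_lt with hK0 | hKpos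
  · have hgc : ∀ a, g a = g x := by
      intro a
      have h0 : |g a - g x| ≤ 0 := by simpa [← hK0] using hgl a x
      have := abs_nonpos_iff.mp (le_antisymm h0 (abs_nonneg _)).le
      linarith [sub_eq_zero.mp this]
    simp only [hgc]
    simp [integral_const, measure_univ, ← hK0]
  · set g' : X → ℝ := fun z => K⁻¹ * g z with hg'def
    have hg' : LipschitzWith 1 g' := by
      refine LipschitzWith.of_dist_le_mul fun a b => ?_
      rw [NNReal.coe_one, one_mul]
      have habs : dist (g' a) (g' b) = K⁻¹ * |g a - g b| := by
        rw [Real.dist_eq, hg'def]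
        simp only
        rw [← mul_sub, abs_mul, abs_of_pos (inv_pos.2 hKpos)]
      rw [habs]
      calc K⁻¹ * |g a - g b| ≤ K⁻¹ * (K * dist a b) :=
            mul_le_mul_of_nonneg_left (hgl a b) (inv_nonneg.2 hK)
        _ = dist a b := by field_simp
      
    have hmem : |(∫ z, g' z ∂(P t x)) - ∫ z, g' z ∂(P t y)| ∈
        {r | ∃ f : X → ℝ, LipschitzWith 1 f ∧
          r = |(∫ z, f z ∂(P t x)) - ∫ z, f z ∂(P t y)|} := ⟨g', hg', rfl⟩
    have hle : |(∫ z, g' z ∂(P t x)) - ∫ z, g' z ∂(P t y)| ≤ Real.exp (-γ * t) * dist x y :=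
      (le_csSup (bddAbove_wass (ffm_P hP hA3 ht x) (ffm_P hP hA3 ht y) x) hmem).trans
        (hA3.2.2 t ht.le x y)
    have e : ∀ z : X, (∫ w, g' w ∂(P t z)) = K⁻¹ * ∫ w, g w ∂(P t z) := fun z =>
      integral_const_mul K⁻¹ g
    have h4 : (∫ z, g' z ∂(P t x)) - ∫ z, g' z ∂(P t y)
        = K⁻¹ * ((∫ z, g z ∂(P t x)) - ∫ z, g z ∂(P t y)) := by
      rw [e x, e y]; ring
    rw [h4, abs_mul, abs_of_pos (inv_pos.2 hKpos)] at hle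
    calc |(∫ z, g z ∂(P t x)) - ∫ z, g z ∂(P t y)|
        = K * (K⁻¹ * |(∫ z, g z ∂(P t x)) - ∫ z, g z ∂(P t y)|) := by field_simp
      _ ≤ K * (Real.exp (-γ * t) * dist x y) := mul_le_mul_of_nonneg_left hle hK

lemma sum_Iic_zero {n : ℕ} (d : Fin (n+1) → ℝ) :
    ∑ i ∈ Finset.Iic (0 : Fin (n+1)), d i = d 0 := by
  have h : Finset.Iic (0 : Fin (n+1)) = {0} := by
    ext i; simp [Fin.le_zero_iff]
  rw [h, Finset.sum_singleton]

lemma sum_Iic_succ {n : ℕ} (d : Fin (n+1) → ℝ) (j : Fin n) :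
    ∑ i ∈ Finset.Iic (Fin.succ j), d i = d 0 + ∑ i ∈ Finset.Iic j, d (Fin.succ i) := by
  have hset : Finset.Iic (Fin.succ j)
      = insert (0 : Fin (n+1)) ((Finset.Iic j).image Fin.succ) := by
    ext i
    simp only [Finset.mem_Iic, Finset.mem_insert, Finset.mem_image]
    constructor
    · intro hi
      rcases Fin.eq_zero_or_eq_succ i with h0 | ⟨k, rfl⟩
      · exact Or.inl h0
      · exact Or.inr ⟨k, Fin.succ_le_succ_iff.mp hi, rfl⟩
    · rintro (rfl | ⟨k, hk, rfl⟩)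
      · exact Fin.zero_le _
      · exact Fin.succ_le_succ_iff.mpr hk
  rw [hset, Finset.sum_insert (by simp [Fin.succ_ne_zero]),
    Finset.sum_image (fun a _ b _ h => Fin.succ_injective _ h)]

lemma main_ind {P : ℝ → X → Measure X} (hP : IsMarkovSemigroup P) {γ : ℝ}
    (hA3 : CondA3 P γ) :
    ∀ (n : ℕ) (f : (Fin n → X) → ℝ), Measurable f → ∀ (C : ℝ), (∀ v, |f v| ≤ C) →
      ∀ (L : Fin n → ℝ≥0),
      (∀ j : Fin n, ∀ v : Fin n → X, ∀ a b : X,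
        |f (Function.update v j a) - f (Function.update v j b)| ≤ (L j : ℝ) * dist a b) →
      ∀ (d : Fin n → ℝ), (∀ j, 0 < d j) → ∀ x y : X,
        |nestedInt P n d f x - nestedInt P n d f y| ≤
          (∑ j, (L j : ℝ) * Real.exp (-γ * ∑ i ∈ Finset.Iic j, d i)) * dist x y := by
  intro n
  induction n with
  | zero => intro f _ C _ L _ d _ x y; simp [nestedInt]
  | succ n ih =>
      intro f hf C hC L hL d hd x y
      set Kn : ℝ := ∑ j : Fin n, (L j.succ : ℝ) *
        Real.exp (-γ * ∑ i ∈ Finset.Iic j, Fin.tail d i) with hKn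
      have hKn0 : 0 ≤ Kn := Finset.sum_nonneg fun j _ =>
        mul_nonneg (L j.succ).coe_nonneg (Real.exp_nonneg _)
      have hdt : ∀ j : Fin n, 0 ≤ Fin.tail d j := fun j => (hd j.succ).le
      have hmcons : ∀ a : X, Measurable (fun v : Fin n → X => f (Fin.cons a v)) := fun a =>
        hf.comp (measurable_cons.comp (measurable_const.prodMk measurable_id))
      set h : X → ℝ := fun z => nestedInt P n (Fin.tail d) (fun v => f (Fin.cons z v)) z with hh
      have hlip : ∀ a b : X, |h a - h b| ≤ ((L 0 : ℝ) + Kn) * dist a b := by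
        intro a b
        have t1 : |nestedInt P n (Fin.tail d) (fun v => f (Fin.cons a v)) a
            - nestedInt P n (Fin.tail d) (fun v => f (Fin.cons a v)) b| ≤ Kn * dist a b := by
          refine ih _ (hmcons a) C (fun v => hC _) (fun j => L j.succ) ?_ (Fin.tail d)
            (fun j => hd j.succ) a b
          intro j v c₁ c₂
          have := hL j.succ (Fin.cons a v) c₁ c₂
          rw [← Fin.cons_update, ← Fin.cons_update] at this
          exact this
        have t2 : |nestedInt P n (Fin.tail d) (fun v => f (Fin.cons a v)) b
            - nestedInt P n (Fin.tail d) (fun v => f (Fin.cons b v)) b|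
            ≤ (L 0 : ℝ) * dist a b := by
          refine key_diff hP n (Fin.tail d) hdt _ _ (hmcons a) (hmcons b) C
            (fun v => hC _) (fun v => hC _) _ ?_ b
          intro v
          have := hL 0 (Fin.cons b v) a b
          rw [Fin.update_cons_zero, Fin.update_cons_zero] at this
          exact this
        have tri := abs_sub_le (h a)
          (nestedInt P n (Fin.tail d) (fun v => f (Fin.cons a v)) b) (h b)
        have : |h a - h b| ≤ Kn * dist a b + (L 0 : ℝ) * dist a b := by
          refine tri.trans ?_
          exact add_le_add t1 t2
        calc |h a - h b| ≤ Kn * dist a b + (L 0 : ℝ) * dist a b := this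
          _ = ((L 0 : ℝ) + Kn) * dist a b := by ring
      have hK0 : 0 ≤ (L 0 : ℝ) + Kn := add_nonneg (L 0).coe_nonneg hKn0
      have step := wass_step hP hA3 (hd 0) h ((L 0 : ℝ) + Kn) hK0 hlip x y
      have main : |nestedInt P (n+1) d f x - nestedInt P (n+1) d f y| ≤
          ((L 0 : ℝ) + Kn) * (Real.exp (-γ * d 0) * dist x y) := by
        simpa [nestedInt, hh] using step
      refine main.trans (le_of_eq ?_)
      rw [Fin.sum_univ_succ, sum_Iic_zero]
      have hsum : ∑ j : Fin n, (L j.succ : ℝ)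
          * Real.exp (-γ * ∑ i ∈ Finset.Iic (Fin.succ j), d i)
          = Real.exp (-γ * d 0) * Kn := by
        rw [hKn, Finset.mul_sum]
        refine Finset.sum_congr rfl fun j _ => ?_
        rw [sum_Iic_succ]
        have : -γ * (d 0 + ∑ i ∈ Finset.Iic j, d (Fin.succ i))
            = -γ * d 0 + -γ * ∑ i ∈ Finset.Iic j, Fin.tail d i := by
          simp only [Fin.tail]
          ring
        rw [this, Real.exp_add]
        ring
      rw [hsum]
      ring

end NestedAux

/-- Lemma 4 of Section 4. Under (A3), if `f : Xⁿ → ℝ` (`n ≥ 2`) is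
bounded, Borel measurable and Lipschitz in each coordinate with constant `L j`, and
`0 < s₁ < ⋯ < s_n` are times (written via positive increments `d`, `s_j = Σ_{i ≤ j} d i`),
then `F(x) = ∫⋯∫ f dP_{s_n - s_{n-1}} ⋯ dP_{s₁}` (equal to `E_x[f(Φ_{s₁},…,Φ_{s_n})]`) is
Lipschitz with constant `Σ_j (L j) e^{-γ s_j}`. -/
theorem nested_integral_lipschitz
    (P : ℝ → X → Measure X) (hP : IsMarkovSemigroup P)
    (γ : ℝ) (hA3 : CondA3 P γ)
    (n : ℕ) (hn : 2 ≤ n)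
    (f : (Fin n → X) → ℝ) (hf : Measurable f) (hfb : ∃ C, ∀ v, |f v| ≤ C)
    (L : Fin n → ℝ≥0)
    (hL : ∀ j : Fin n, ∀ v : Fin n → X, ∀ a b : X,
      |f (Function.update v j a) - f (Function.update v j b)| ≤ (L j : ℝ) * dist a b)
    (d : Fin n → ℝ) (hd : ∀ j, 0 < d j) :
    ∀ x y : X,
      |nestedInt P n d f x - nestedInt P n d f y| ≤
        (∑ j : Fin n, (L j : ℝ) * Real.exp (-γ * ∑ i ∈ Finset.Iic j, d i)) * dist x y := by
  obtain ⟨C, hC⟩ := hfb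
  exact NestedAux.main_ind hP hA3 n f hf C hC L hL d hd

end
end
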